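/- arXiv:1906.03052 — 2 statements merged into one kernel-verified Lean document; each statement's English description precedes it below -/
import Mathlib

section
/- For a finite connected simple graph G on vertex set V and sets ∅ ≠ I ⊆ O ⊆ V, the transition probability is a probability: 0 ≤ ρ_{I→O} ≤ 1. -/
open Finset

variable {V : Type*} [Fintype V] [DecidableEq V]

/-- The adjacency matrix of the graph, real-valued. -/
noncomputable def adjMat (G : SimpleGraph V) [DecidableRel G.Adj] (i j : V) : ℝ :=
  if G.Adj i j then 1 else 0

/-- `vol(I,J) = ∑_{i∈I} ∑_{j∈J} A_{ij}`. -/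
noncomputable def vol (G : SimpleGraph V) [DecidableRel G.Adj] (I J : Finset V) : ℝ :=
  ∑ i ∈ I, ∑ j ∈ J, adjMat G i j

/-- Weight of an infection ordering starting from infected set `I`:
`∏_k vol(I_{k-1},{σ_k}) / vol(I_{k-1}, V∖I_{k-1})`. -/
noncomputable def pathWeight (G : SimpleGraph V) [DecidableRel G.Adj] :
    Finset V → List V → ℝ
  | _, [] => 1
  | I, j :: rest => (vol G I {j} / vol G I Iᶜ) * pathWeight G (insert j I) rest

/-- A listing is a valid infection ordering from `I` when each new node is adjacent to some
already-infected node. -/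
def validOrdering (G : SimpleGraph V) [DecidableRel G.Adj] :
    Finset V → List V → Bool
  | _, [] => true
  | I, j :: rest => (decide (∃ i ∈ I, G.Adj i j)) && validOrdering G (insert j I) rest

/-- The set of infection orderings from `I` to `O`: listings of the distinct elements of `O ∖ I`
in which each node is adjacent to a previously infected node. -/
noncomputable def orderings (G : SimpleGraph V) [DecidableRel G.Adj] (I O : Finset V) :
    Finset (List V) :=
  ((O \ I).toList.permutations.toFinset).filter fun l => validOrdering G I l

/-- The transition probability `ρ_{I→O}`: the sum of the weights of all infection orderings
from `I` to `O`. -/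
noncomputable def transProb (G : SimpleGraph V) [DecidableRel G.Adj] (I O : Finset V) : ℝ :=
  ∑ l ∈ orderings G I O, pathWeight G I l

/- Each step of an infection ordering picks a new vertex `j` with probability
`vol(I,{j}) / vol(I,V∖I)`; these first-step probabilities over `j ∉ I` sum to at most one, so
by induction on `|O ∖ I|` the weights of all listings of `O ∖ I` sum to at most one, and the
infection orderings are among them. -/

theorem Finset.toList_permutations_toFinset_eq_biUnion {α : Type*} [DecidableEq α] {s : Finset α}
    (hs : s.Nonempty) :
    s.toList.permutations.toFinset =
      s.biUnion fun j => (s.erase j).toList.permutations.toFinset.image (List.cons j) := by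
  ext l
  simp only [List.mem_toFinset, List.mem_permutations, Finset.mem_biUnion, Finset.mem_image,
    ← Multiset.coe_eq_coe, Finset.coe_toList, Finset.erase_val]
  cases l with
  | nil =>
    simp only [reduceCtorEq, and_false, exists_false, iff_false]
    intro h
    simpa [← Finset.val_eq_zero, ← h] using hs.ne_empty
  | cons j rest =>
    simp only [List.cons.injEq, existsAndEq, and_true, ← Multiset.cons_coe]
    constructor
    · intro h
      exact ⟨Finset.mem_def.2 (h ▸ Multiset.mem_cons_self j _),
        by rw [← h, Multiset.erase_cons_head]⟩
    · rintro ⟨hj, h⟩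
      rw [h, Multiset.cons_erase hj]

section Weights

variable (G : SimpleGraph V) [DecidableRel G.Adj]

section

omit [Fintype V] [DecidableEq V]

theorem adjMat_nonneg (i j : V) : 0 ≤ adjMat G i j := by
  unfold adjMat
  split_ifs <;> norm_num

theorem vol_nonneg (I J : Finset V) : 0 ≤ vol G I J :=
  sum_nonneg fun i _ => sum_nonneg fun j _ => adjMat_nonneg G i j

theorem vol_mono_right (I : Finset V) {J K : Finset V} (h : J ⊆ K) : vol G I J ≤ vol G I K :=
  sum_le_sum fun i _ => sum_le_sum_of_subset_of_nonneg h fun j _ _ => adjMat_nonneg G i j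

theorem sum_vol_singleton (I J : Finset V) : ∑ j ∈ J, vol G I {j} = vol G I J := by
  simp only [vol, sum_singleton]
  exact sum_comm

end

/-- If `I` has no outgoing edges, the left side is `0` since `x / 0 = 0`. -/
theorem sum_vol_singleton_div_le_one {I s : Finset V} (hs : Disjoint s I) :
    ∑ j ∈ s, vol G I {j} / vol G I Iᶜ ≤ 1 :=
  calc ∑ j ∈ s, vol G I {j} / vol G I Iᶜ = vol G I s / vol G I Iᶜ := by
        rw [← sum_div, sum_vol_singleton]
    _ ≤ vol G I Iᶜ / vol G I Iᶜ :=
        div_le_div_of_nonneg_right (vol_mono_right G I (subset_compl_iff_disjoint_right.2 hs))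
          (vol_nonneg G I Iᶜ)
    _ ≤ 1 := div_self_le_one _

theorem pathWeight_nonneg : ∀ (I : Finset V) (l : List V), 0 ≤ pathWeight G I l
  | _, [] => zero_le_one
  | I, _ :: rest => mul_nonneg (div_nonneg (vol_nonneg G _ _) (vol_nonneg G _ _))
      (pathWeight_nonneg (insert _ I) rest)

theorem sum_pathWeight_permutations_le_one {s I : Finset V} (hs : Disjoint s I) :
    ∑ l ∈ s.toList.permutations.toFinset, pathWeight G I l ≤ 1 := by
  induction s using Finset.strongInduction generalizing I with
  | H s ih =>
  rcases s.eq_empty_or_nonempty with rfl | hne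
  · simp [pathWeight]
  have heads_disjoint : (s : Set V).PairwiseDisjoint fun j =>
      (s.erase j).toList.permutations.toFinset.image (List.cons j) := by
    intro a _ b _ hab
    refine disjoint_left.2 fun l ha hb => hab ?_
    obtain ⟨_, _, rfl⟩ := mem_image.1 ha
    obtain ⟨_, _, h⟩ := mem_image.1 hb
    exact (List.cons.inj h).1.symm
  rw [Finset.toList_permutations_toFinset_eq_biUnion hne, sum_biUnion heads_disjoint]
  calc ∑ j ∈ s, ∑ l ∈ (s.erase j).toList.permutations.toFinset.image (List.cons j),
        pathWeight G I l
      = ∑ j ∈ s, vol G I {j} / vol G I Iᶜ *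
          ∑ l ∈ (s.erase j).toList.permutations.toFinset, pathWeight G (insert j I) l := by
        refine sum_congr rfl fun j _ => ?_
        rw [sum_image fun _ _ _ _ h => List.cons_injective h, mul_sum]
        rfl
    _ ≤ ∑ j ∈ s, vol G I {j} / vol G I Iᶜ := sum_le_sum fun j hj =>
        mul_le_of_le_one_right (div_nonneg (vol_nonneg G _ _) (vol_nonneg G _ _))
          (ih _ (erase_ssubset hj)
            (disjoint_insert_right.2 ⟨notMem_erase j s, hs.mono_left (erase_subset j s)⟩))
    _ ≤ 1 := sum_vol_singleton_div_le_one G hs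

end Weights

theorem transProb_nonneg_le_one_general (G : SimpleGraph V) [DecidableRel G.Adj]
    (I O : Finset V) :
    0 ≤ transProb G I O ∧ transProb G I O ≤ 1 :=
  ⟨sum_nonneg fun l _ => pathWeight_nonneg G I l,
    (sum_le_sum_of_subset_of_nonneg (filter_subset _ _) fun l _ _ => pathWeight_nonneg G I l).trans
      (sum_pathWeight_permutations_le_one G sdiff_disjoint)⟩

/-- The transition probability is a probability: `0 ≤ ρ_{I→O} ≤ 1`. -/
theorem transProb_nonneg_le_one (G : SimpleGraph V) [DecidableRel G.Adj] (hG : G.Connected)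
    (I O : Finset V) (hI : I.Nonempty) (hIO : I ⊆ O) :
    0 ≤ transProb G I O ∧ transProb G I O ≤ 1 :=
  transProb_nonneg_le_one_general G I O
end

section
/- Let A be the adjacency matrix of a finite simple graph on vertex set V and fix O ⊆ V. For j ≠ j′ in O, the (j,j′) entry of QᵀQ satisfies ∑_{I ⊊ O} 1{j∉I} 1{j′∉I} vol(I,{j}) vol(I,{j′}) = 2^{|O|−4} · [ deg_{O∖{j′}}(j) · deg_{O∖{j}}(j′) + vol^{(2)}_{O∖{j,j′}}(j,j′) ], where 2^{|O|−4} denotes the real power (equal to 1/4 when |O|=2, etc.). -/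
open Finset

variable {V : Type*} [Fintype V] [DecidableEq V]

/-- `deg_S(i) = ∑_{s∈S} A_{is}`. -/
noncomputable def degS (G : SimpleGraph V) [DecidableRel G.Adj] (S : Finset V) (i : V) : ℝ :=
  ∑ s ∈ S, adjMat G i s

/-- `vol²_S(i,j) = ∑_{r∈S} A_{ir} A_{rj}`, the number of paths of length 2 from `i` to `j`
through `S`. -/
noncomputable def vol2 (G : SimpleGraph V) [DecidableRel G.Adj] (S : Finset V) (i j : V) : ℝ :=
  ∑ r ∈ S, adjMat G i r * adjMat G r j

/-!
For `I ⊆ S := O ∖ {j, j'}` (the only sets that contribute) write `vol(I,{j}) = ∑_{i∈I} a_i` and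
`vol(I,{j'}) = ∑_{i∈I} b_i`. Expanding the product, a pair `i ≠ i'` of elements of `S` lies in
`2^{|S|-2}` subsets of `S` and a single element in `2^{|S|-1}`, so
`4 ∑_{I⊆S} (∑_I a)(∑_I b) = 2^{|S|} ((∑_S a)(∑_S b) + ∑_S a b)`, an identity valid in any
commutative semiring. Since `|S| = |O| - 2` and `A` is symmetric with zero diagonal, this is the
claim.
-/

section
variable {α R : Type*} [DecidableEq α] [CommSemiring R]

theorem two_mul_sum_powerset_sum (s : Finset α) (a : α → R) :
    2 * ∑ t ∈ s.powerset, ∑ i ∈ t, a i = 2 ^ #s * ∑ i ∈ s, a i := by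
  induction s using Finset.induction_on with
  | empty => simp
  | insert x s hx ih =>
    have hins : ∀ t ∈ s.powerset, ∑ i ∈ insert x t, a i = a x + ∑ i ∈ t, a i := fun t ht =>
      sum_insert fun hxt => hx (mem_powerset.1 ht hxt)
    rw [sum_powerset_insert hx, sum_congr rfl hins, sum_add_distrib, sum_const, card_powerset,
      card_insert_of_notMem hx, sum_insert hx, nsmul_eq_mul]
    push_cast
    calc _ = 2 * (2 * ∑ t ∈ s.powerset, ∑ i ∈ t, a i) + 2 ^ (#s + 1) * a x := by ring
      _ = _ := by rw [ih]; ring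

theorem four_mul_sum_powerset_sum_mul_sum (s : Finset α) (a b : α → R) :
    4 * ∑ t ∈ s.powerset, (∑ i ∈ t, a i) * ∑ i ∈ t, b i =
      2 ^ #s * ((∑ i ∈ s, a i) * (∑ i ∈ s, b i) + ∑ i ∈ s, a i * b i) := by
  induction s using Finset.induction_on with
  | empty => simp
  | insert x s hx ih =>
    have hins : ∀ (f : α → R), ∀ t ∈ s.powerset, ∑ i ∈ insert x t, f i = f x + ∑ i ∈ t, f i :=
      fun f t ht => sum_insert fun hxt => hx (mem_powerset.1 ht hxt)
    have hexp : ∀ t ∈ s.powerset, (∑ i ∈ insert x t, a i) * ∑ i ∈ insert x t, b i =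
        (∑ i ∈ t, a i) * (∑ i ∈ t, b i) + a x * ∑ i ∈ t, b i + b x * ∑ i ∈ t, a i +
          a x * b x := fun t ht => by
      rw [hins a t ht, hins b t ht]; ring
    rw [sum_powerset_insert hx, sum_congr rfl hexp]
    simp only [sum_add_distrib, ← mul_sum, sum_const, card_powerset, nsmul_eq_mul]
    rw [card_insert_of_notMem hx, sum_insert hx, sum_insert hx, sum_insert hx]
    push_cast
    calc _ = 2 * (4 * ∑ t ∈ s.powerset, (∑ i ∈ t, a i) * ∑ i ∈ t, b i)
          + 2 * a x * (2 * ∑ t ∈ s.powerset, ∑ i ∈ t, b i)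
          + 2 * b x * (2 * ∑ t ∈ s.powerset, ∑ i ∈ t, a i) + 4 * 2 ^ #s * (a x * b x) := by
          ring
      _ = _ := by rw [ih, two_mul_sum_powerset_sum, two_mul_sum_powerset_sum]; ring

theorem filter_notMem_powerset (s : Finset α) (a : α) :
    {t ∈ s.powerset | a ∉ t} = (s.erase a).powerset := by
  ext t
  simp only [mem_filter, mem_powerset, subset_erase]

theorem filter_ssubset_notMem_powerset {s : Finset α} {a : α} (ha : a ∈ s) :
    {t ∈ s.powerset | t ⊂ s ∧ a ∉ t} = (s.erase a).powerset := by
  rw [← filter_notMem_powerset]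
  refine filter_congr fun t hts => and_iff_right_of_imp fun hat => ?_
  exact ssubset_of_subset_of_ne (mem_powerset.1 hts) (ne_of_mem_of_not_mem' ha hat).symm
end

section
omit [Fintype V] [DecidableEq V]
variable (G : SimpleGraph V) [DecidableRel G.Adj]

theorem adjMat_comm (i j : V) : adjMat G i j = adjMat G j i := by
  simp [adjMat, G.adj_comm]

theorem adjMat_self (i : V) : adjMat G i i = 0 := by
  simp [adjMat]

theorem vol_singleton (I : Finset V) (j : V) : vol G I {j} = ∑ i ∈ I, adjMat G i j := by
  simp [vol]

theorem degS_eq_sum_erase [DecidableEq V] (S : Finset V) (j : V) :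
    degS G S j = ∑ i ∈ S.erase j, adjMat G i j := by
  rw [degS, ← sum_erase S (adjMat_self G j)]
  exact sum_congr rfl fun i _ => adjMat_comm G j i

theorem vol2_eq_sum (S : Finset V) (j j' : V) :
    vol2 G S j j' = ∑ i ∈ S, adjMat G i j * adjMat G i j' := by
  simp only [vol2, adjMat_comm G j]
end

/-- Off-diagonal entries of `QᵀQ`: for `j ≠ j'` in `O`,
`∑_{I ⊊ O} 1{j∉I} 1{j′∉I} vol(I,{j}) vol(I,{j′})
  = 2^{|O|−4} [deg_{O∖{j′}}(j) deg_{O∖{j}}(j′) + vol²_{O∖{j,j′}}(j,j′)]`. -/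
theorem QtQ_offdiag (G : SimpleGraph V) [DecidableRel G.Adj] (O : Finset V)
    (j j' : V) (hj : j ∈ O) (hj' : j' ∈ O) (hne : j ≠ j') :
    ∑ I ∈ O.powerset.filter (fun I => I ⊂ O),
        (if j ∉ I then (1 : ℝ) else 0) * (if j' ∉ I then (1 : ℝ) else 0) *
          (vol G I {j} * vol G I {j'}) =
      (2 : ℝ) ^ ((O.card : ℤ) - 4) *
        (degS G (O.erase j') j * degS G (O.erase j) j'
          + vol2 G ((O.erase j).erase j') j j') := by
  set S := (O.erase j).erase j'
  have hcard : (#O : ℤ) = #S + 2 := by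
    have hO : 1 < #O := one_lt_card.2 ⟨j, hj, j', hj', hne⟩
    rw [card_erase_of_mem (mem_erase.2 ⟨hne.symm, hj'⟩), card_erase_of_mem hj]
    omega
  have hsum : ∑ I ∈ O.powerset.filter (fun I => I ⊂ O),
        (if j ∉ I then (1 : ℝ) else 0) * (if j' ∉ I then (1 : ℝ) else 0) *
          (vol G I {j} * vol G I {j'}) =
      ∑ I ∈ S.powerset, (∑ i ∈ I, adjMat G i j) * ∑ i ∈ I, adjMat G i j' := by
    simp only [ite_mul, one_mul, zero_mul, ← sum_filter, vol_singleton]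
    rw [filter_filter (· ⊂ O) (j ∉ ·) O.powerset, filter_ssubset_notMem_powerset hj,
      filter_notMem_powerset]
  rw [hsum, degS_eq_sum_erase, degS_eq_sum_erase, erase_right_comm, vol2_eq_sum, hcard,
    add_sub_assoc, zpow_add₀ two_ne_zero, zpow_natCast]
  linear_combination (2 : ℝ) ^ (-2 : ℤ) *
    four_mul_sum_powerset_sum_mul_sum S (adjMat G · j) (adjMat G · j')
end
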